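/- arXiv:1911.00038 — 4 statements merged into one kernel-verified Lean document; each statement's English description precedes it below -/
import Mathlib

section
/- Let Q : X → Y be an E-LDP channel. For any x, x' ∈ X and any decision rule X̂ : Y → {x, x'}, defining P_FA = Pr(X̂ = x | X = x') = Σ_{y : X̂(y)=x} Q(y|x') and P_MD = Pr(X̂ = x' | X = x) = Σ_{y : X̂(y)=x'} Q(y|x), we have both P_FA + e^{ε_{x',x}} P_MD ≥ 1 and e^{ε_{x,x'}} P_FA + P_MD ≥ 1. -/
lemma ldp_aux {X Y : Type*} [Fintype X] [Fintype Y] [DecidableEq X] [DecidableEq Y]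
    (Q : X → Y → ℝ) (hQ0 : ∀ x y, 0 ≤ Q x y) (hQ1 : ∀ x, ∑ y, Q x y = 1)
    (dec : Y → X) (x x' : X) (hdec : ∀ y, dec y = x ∨ dec y = x') (a : X) :
    1 ≤ (∑ y ∈ Finset.univ.filter (fun y => dec y = x), Q a y)
        + (∑ y ∈ Finset.univ.filter (fun y => dec y = x'), Q a y) := by
  set S := Finset.univ.filter (fun y => dec y = x)
  set T := Finset.univ.filter (fun y => dec y = x')
  have hunion : S ∪ T = Finset.univ := by
    ext y
    simp only [S, T, Finset.mem_union, Finset.mem_filter, Finset.mem_univ, true_and, iff_true]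
    exact hdec y
  have h1 : ∑ y ∈ S, Q a y + ∑ y ∈ T, Q a y
      = ∑ y ∈ S ∪ T, Q a y + ∑ y ∈ S ∩ T, Q a y :=
    (Finset.sum_union_inter).symm
  have h2 : (0:ℝ) ≤ ∑ y ∈ S ∩ T, Q a y :=
    Finset.sum_nonneg fun y _ => hQ0 a y
  rw [h1, hunion, hQ1]
  linarith

/-- Forward direction of the operational interpretation of context-aware LDP:
any E-LDP channel forces the stated trade-offs between false alarm and
miss detection probabilities for every binary decision rule. -/
theorem contextAwareLDP_hypothesisTesting
    {X Y : Type*} [Fintype X] [Fintype Y] [DecidableEq X] [DecidableEq Y]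
    (Q : X → Y → ℝ) (E : X → X → ℝ)
    (hQ0 : ∀ x y, 0 ≤ Q x y) (hQ1 : ∀ x, ∑ y, Q x y = 1)
    (hE : ∀ x x', 0 ≤ E x x')
    (hLDP : ∀ x x' y, Q x y ≤ Real.exp (E x x') * Q x' y)
    (x x' : X) (dec : Y → X) (hdec : ∀ y, dec y = x ∨ dec y = x') :
    (∑ y ∈ Finset.univ.filter (fun y => dec y = x), Q x' y)
        + Real.exp (E x' x) * (∑ y ∈ Finset.univ.filter (fun y => dec y = x'), Q x y) ≥ 1 ∧
    Real.exp (E x x') * (∑ y ∈ Finset.univ.filter (fun y => dec y = x), Q x' y)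
        + (∑ y ∈ Finset.univ.filter (fun y => dec y = x'), Q x y) ≥ 1 := by
  constructor
  · have h := ldp_aux Q hQ0 hQ1 dec x x' hdec x'
    have hb : (∑ y ∈ Finset.univ.filter (fun y => dec y = x'), Q x' y)
        ≤ Real.exp (E x' x) * ∑ y ∈ Finset.univ.filter (fun y => dec y = x'), Q x y := by
      rw [Finset.mul_sum]
      exact Finset.sum_le_sum fun y _ => hLDP x' x y
    linarith
  · have h := ldp_aux Q hQ0 hQ1 dec x x' hdec x
    have hb : (∑ y ∈ Finset.univ.filter (fun y => dec y = x), Q x y)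
        ≤ Real.exp (E x x') * ∑ y ∈ Finset.univ.filter (fun y => dec y = x), Q x' y := by
      rw [Finset.mul_sum]
      exact Finset.sum_le_sum fun y _ => hLDP x x' y
    linarith
end

section
/- Let Q : X → Y be a channel and fix x, x' ∈ X. Suppose that for every decision rule X̂ : Y → {x, x'}, with P_FA = Σ_{y : X̂(y)=x} Q(y|x') and P_MD = Σ_{y : X̂(y)=x'} Q(y|x), the inequality e^{ε_{x,x'}} P_FA + P_MD ≥ 1 holds. Then Q(S|x) ≤ e^{ε_{x,x'}} Q(S|x') for every subset S ⊆ Y. (Converse direction of the operational interpretation of context-aware LDP.) -/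
/-- Converse direction of the operational interpretation of context-aware LDP. -/
theorem contextAwareLDP_hypothesisTesting_converse
    {X Y : Type*} [Fintype X] [Fintype Y] [DecidableEq X] [DecidableEq Y]
    (Q : X → Y → ℝ)
    (hQ0 : ∀ x y, 0 ≤ Q x y) (hQ1 : ∀ x, ∑ y, Q x y = 1)
    (x x' : X) (ε : ℝ) (hε : 0 ≤ ε)
    (htest : ∀ dec : Y → X, (∀ y, dec y = x ∨ dec y = x') →
      Real.exp ε * (∑ y ∈ Finset.univ.filter (fun y => dec y = x), Q x' y)
        + (∑ y ∈ Finset.univ.filter (fun y => dec y = x'), Q x y) ≥ 1) :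
    ∀ S : Finset Y, (∑ y ∈ S, Q x y) ≤ Real.exp ε * ∑ y ∈ S, Q x' y := by
  intro S
  by_cases hxx : x = x'
  · subst hxx
    have h1 : (1:ℝ) ≤ Real.exp ε := Real.one_le_exp hε
    have h0 : 0 ≤ ∑ y ∈ S, Q x y := Finset.sum_nonneg fun y _ => hQ0 x y
    nlinarith
  · set dec : Y → X := fun y => if y ∈ S then x else x' with hdec
    have h := htest dec (fun y => by by_cases h : y ∈ S <;> simp [hdec, h])
    have hA : Finset.univ.filter (fun y => dec y = x) = S := by
      ext y; by_cases h : y ∈ S <;> simp [hdec, h, Ne.symm hxx]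
    have hB : Finset.univ.filter (fun y => dec y = x') = Sᶜ := by
      ext y; by_cases h : y ∈ S <;> simp [hdec, h, hxx]
    rw [hA, hB] at h
    have hsplit : ∑ y ∈ S, Q x y + ∑ y ∈ Sᶜ, Q x y = 1 := by
      rw [Finset.sum_add_sum_compl]; exact hQ1 x
    linarith
end

section
/- Let Q : [k] → Y be a channel over finite Y, ε > 0, satisfying Q(y|1) ≤ e^ε Q(y|i) for all i ∈ {s+1, ..., s+k'} and y ∈ Y, where k = s + k'. Then Σ_{i=1}^{k'} Σ_{y∈Y} (Q(y|s+i) − Q(y|1))² / (Σ_{j=1}^{k} Q(y|j)) ≤ (e^ε − 1) + k(1 − e^{−ε}) (and is hence O(εk) for ε = O(1)). -/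
/-!
Fix an output `y`, write `D` for the column sum `∑ⱼ Q(y|j)`, `b = Q(y|1)` and `a = Q(y|s+i)`,
and put `t = e^ε`. The LDP condition `b ≤ t a` gives `(a - b)² ≤ a (a - b/t) + (1 - 1/t) b²`,
and `a ≤ D` turns the first part into `a - b/t` after dividing by `D`. Summing the `k'` rows
makes the remainder `k' (1 - 1/t) b² / D`, which is at most `(t - 1) b` because
`k' b ≤ t ∑ᵢ a ≤ t D`. Summing over `y`, the rows being probability vectors, gives
`k' (1 - e^{-ε}) + (e^ε - 1)`.
-/

open Finset

lemma sq_sub_div_le_of_le_mul {a b t D : ℝ} (ht : 1 ≤ t) (hb : 0 ≤ b) (hba : b ≤ t * a)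
    (haD : a ≤ D) (hD : 0 < D) :
    (a - b) ^ 2 / D ≤ (a - t⁻¹ * b) + (1 - t⁻¹) * b ^ 2 / D := by
  have ht0 : 0 < t := by linarith
  have hinv_le : t⁻¹ ≤ 1 := inv_le_one_of_one_le₀ ht
  have hba' : t⁻¹ * b ≤ a := by rwa [inv_mul_le_iff₀ ht0]
  have ha : 0 ≤ a := le_trans (by positivity) hba'
  have hnum : (a - b) ^ 2 ≤ a * (a - t⁻¹ * b) + (1 - t⁻¹) * b ^ 2 := by
    nlinarith [mul_le_mul_of_nonneg_left hba' hb,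
      mul_le_mul_of_nonneg_right hinv_le (mul_nonneg ha hb)]
  have hfirst : a * (a - t⁻¹ * b) / D ≤ a - t⁻¹ * b := by
    rw [div_le_iff₀ hD]
    exact mul_le_mul_of_nonneg_right haD (sub_nonneg.mpr hba') |>.trans_eq (mul_comm _ _)
  calc (a - b) ^ 2 / D ≤ (a * (a - t⁻¹ * b) + (1 - t⁻¹) * b ^ 2) / D := by gcongr
    _ = a * (a - t⁻¹ * b) / D + (1 - t⁻¹) * b ^ 2 / D := add_div _ _ _
    _ ≤ (a - t⁻¹ * b) + (1 - t⁻¹) * b ^ 2 / D := by linarith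

lemma sum_sq_sub_div_le_of_le_mul {ι : Type*} [Fintype ι] {a : ι → ℝ} {b t D : ℝ}
    (ht : 1 ≤ t) (ha : ∀ i, 0 ≤ a i) (hb : 0 ≤ b) (hba : ∀ i, b ≤ t * a i)
    (hsum : ∑ i, a i ≤ D) :
    ∑ i, (a i - b) ^ 2 / D ≤ ∑ i, (a i - t⁻¹ * b) + (t - 1) * b := by
  have ht0 : 0 < t := by linarith
  have hterm : ∀ i, 0 ≤ a i - t⁻¹ * b := fun i => by
    rw [sub_nonneg, inv_mul_le_iff₀ ht0]; exact hba i
  have hrhs : 0 ≤ ∑ i, (a i - t⁻¹ * b) + (t - 1) * b :=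
    add_nonneg (sum_nonneg fun i _ => hterm i) (mul_nonneg (by linarith) hb)
  rcases le_or_gt D 0 with hD | hD
  · exact (sum_nonpos fun i _ => div_nonpos_of_nonneg_of_nonpos (sq_nonneg _) hD).trans hrhs
  have haD : ∀ i, a i ≤ D := fun i =>
    (single_le_sum (fun j _ => ha j) (mem_univ i)).trans hsum
  have hcard : (Fintype.card ι : ℝ) * b ≤ t * D := by
    calc (Fintype.card ι : ℝ) * b = ∑ _i : ι, b := by simp
      _ ≤ ∑ i, t * a i := sum_le_sum fun i _ => hba i
      _ = t * ∑ i, a i := (mul_sum _ _ _).symm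
      _ ≤ t * D := by gcongr
  have hrem : (Fintype.card ι : ℝ) * ((1 - t⁻¹) * b ^ 2 / D) ≤ (t - 1) * b := by
    have h1t : 0 ≤ 1 - t⁻¹ := sub_nonneg.mpr (inv_le_one_of_one_le₀ ht)
    calc (Fintype.card ι : ℝ) * ((1 - t⁻¹) * b ^ 2 / D)
        = (1 - t⁻¹) * b * ((Fintype.card ι : ℝ) * b / D) := by ring
      _ ≤ (1 - t⁻¹) * b * t := by
          gcongr
          rwa [div_le_iff₀ hD]
      _ = (t - 1) * b := by field_simp
  calc ∑ i, (a i - b) ^ 2 / D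
      ≤ ∑ i, ((a i - t⁻¹ * b) + (1 - t⁻¹) * b ^ 2 / D) :=
        sum_le_sum fun i _ => sq_sub_div_le_of_le_mul ht hb (hba i) (haD i) hD
    _ = ∑ i, (a i - t⁻¹ * b) + (Fintype.card ι : ℝ) * ((1 - t⁻¹) * b ^ 2 / D) := by
        rw [sum_add_distrib, sum_const, card_univ, nsmul_eq_mul]
    _ ≤ ∑ i, (a i - t⁻¹ * b) + (t - 1) * b := by linarith

lemma sum_sub_mul_eq_of_sum_eq_one {Y : Type*} [Fintype Y] {p q : Y → ℝ}
    (hp : ∑ y, p y = 1) (hq : ∑ y, q y = 1) (c : ℝ) :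
    ∑ y, (p y - c * q y) = 1 - c := by
  rw [sum_sub_distrib, ← mul_sum, hp, hq, mul_one]

/-- Chi-square-type bound for high-low LDP channels: if the first input
satisfies `Q(y|1) ≤ e^ε Q(y|s+i)` against every non-sensitive input, then the
normalized squared-difference sum is at most `(e^ε - 1) + k (1 - e^{-ε})`,
where `k = s + k'`. -/
theorem highLow_chiSquare_bound
    (s k' : ℕ) (hs : 0 < s)
    {Y : Type*} [Fintype Y]
    (Q : Fin (s + k') → Y → ℝ) (ε : ℝ) (hε : 0 < ε)
    (hQ0 : ∀ j y, 0 ≤ Q j y) (hQ1 : ∀ j, ∑ y, Q j y = 1)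
    (hLDP : ∀ (i : Fin k') (y : Y),
      Q ⟨0, by omega⟩ y ≤ Real.exp ε * Q (Fin.natAdd s i) y) :
    ∑ i : Fin k', ∑ y : Y,
        (Q (Fin.natAdd s i) y - Q ⟨0, by omega⟩ y) ^ 2 / (∑ j, Q j y)
      ≤ (Real.exp ε - 1) + (s + k' : ℝ) * (1 - Real.exp (-ε)) := by
  set q₀ := Q ⟨0, by omega⟩
  set t := Real.exp ε
  have ht : 1 ≤ t := Real.one_le_exp hε.le
  have hrows : ∀ y, ∑ i : Fin k', Q (Fin.natAdd s i) y ≤ ∑ j, Q j y := fun y => by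
    rw [Fin.sum_univ_add (f := fun j => Q j y)]
    exact le_add_of_nonneg_left (sum_nonneg fun i _ => hQ0 _ y)
  calc ∑ i : Fin k', ∑ y, (Q (Fin.natAdd s i) y - q₀ y) ^ 2 / (∑ j, Q j y)
      = ∑ y, ∑ i : Fin k', (Q (Fin.natAdd s i) y - q₀ y) ^ 2 / (∑ j, Q j y) := sum_comm
    _ ≤ ∑ y, (∑ i : Fin k', (Q (Fin.natAdd s i) y - t⁻¹ * q₀ y) + (t - 1) * q₀ y) :=
        sum_le_sum fun y _ => sum_sq_sub_div_le_of_le_mul ht (fun i => hQ0 _ y) (hQ0 _ y)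
          (fun i => hLDP i y) (hrows y)
    _ = k' * (1 - t⁻¹) + (t - 1) := by
        have hq₀ : ∑ y, q₀ y = 1 := hQ1 _
        rw [sum_add_distrib, sum_comm, ← mul_sum, hq₀, mul_one,
          sum_congr rfl fun i _ => sum_sub_mul_eq_of_sum_eq_one (hQ1 _) hq₀ t⁻¹]
        simp only [sum_const, card_univ, Fintype.card_fin, nsmul_eq_mul]
    _ ≤ (t - 1) + (s + k' : ℝ) * (1 - Real.exp (-ε)) := by
        rw [Real.exp_neg]
        nlinarith [inv_le_one_of_one_le₀ ht, (Nat.cast_nonneg s : (0 : ℝ) ≤ s)]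
end

section
/- Let s < k, S = 2^{⌈log₂(s+1)⌉}, t = k − s. Define the channel Q on input domain [k] with output domain [S + t] by: for x ∈ A = [s], Q(y|x) = 2e^ε/(S(e^ε+1)) if y ∈ [S] and H_S(x, y) = 1, Q(y|x) = 2/(S(e^ε+1)) if y ∈ [S] and H_S(x, y) = −1, and Q(y|x) = 0 for y ∉ [S]; for x ∉ A, Q(y|x) = 2/(S(e^ε+1)) for y ∈ [S], Q(y|x) = (e^ε−1)/(e^ε+1) for y = x + S − s, and 0 otherwise. Then Q is a valid channel (each row sums to 1) and satisfies (A, ε)-high-low LDP: Q(y|x) ≤ e^ε Q(y|x') for all x ∈ A, x' ∈ [k], y ∈ [S+t]. -/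
/-- Sylvester's construction of Hadamard matrices. -/
def sylvester : (n : ℕ) → Fin (2 ^ n) → Fin (2 ^ n) → ℤ
  | 0 => fun _ _ => 1
  | n + 1 => fun i j =>
      (if (i : ℕ) < 2 ^ n ∨ (j : ℕ) < 2 ^ n then 1 else -1) *
        sylvester n ⟨(i : ℕ) % 2 ^ n, Nat.mod_lt _ (Nat.two_pow_pos n)⟩
          ⟨(j : ℕ) % 2 ^ n, Nat.mod_lt _ (Nat.two_pow_pos n)⟩

lemma sylvester_pm : ∀ (n : ℕ) (i j : Fin (2 ^ n)), sylvester n i j = 1 ∨ sylvester n i j = -1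
  | 0, _, _ => Or.inl rfl
  | n + 1, i, j => by
    simp only [sylvester]
    rcases sylvester_pm n ⟨(i : ℕ) % 2 ^ n, Nat.mod_lt _ (Nat.two_pow_pos n)⟩
      ⟨(j : ℕ) % 2 ^ n, Nat.mod_lt _ (Nat.two_pow_pos n)⟩ with h | h <;>
      rw [h] <;> split_ifs <;> simp

lemma sylvester_row_sum : ∀ (n : ℕ) (i : Fin (2 ^ n)), (i : ℕ) ≠ 0 →
    ∑ j, sylvester n i j = 0
  | 0, i, hi => absurd (Fin.val_eq_zero i) hi
  | n + 1, i, hi => by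
    have e2 : 2 ^ (n + 1) = 2 ^ n + 2 ^ n := by rw [pow_succ]; ring
    set i' : Fin (2 ^ n) := ⟨(i : ℕ) % 2 ^ n, Nat.mod_lt _ (Nat.two_pow_pos n)⟩ with hi'
    have key : ∑ j, sylvester (n + 1) i j =
        ∑ j : Fin (2 ^ n), sylvester (n + 1) i (finCongr e2.symm (Fin.castAdd _ j)) +
        ∑ j : Fin (2 ^ n), sylvester (n + 1) i (finCongr e2.symm (Fin.natAdd _ j)) := by
      rw [← Fin.sum_univ_add (f := fun j : Fin (2 ^ n + 2 ^ n) =>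
        sylvester (n + 1) i (finCongr e2.symm j))]
      exact (Fintype.sum_equiv (finCongr e2.symm) _ _ (fun _ => rfl)).symm
    have hlow : ∀ j : Fin (2 ^ n),
        sylvester (n + 1) i (finCongr e2.symm (Fin.castAdd _ j)) = sylvester n i' j := by
      intro j
      show (if (i : ℕ) < 2 ^ n ∨ ((j : ℕ)) < 2 ^ n then 1 else -1) *
        sylvester n i' ⟨(j : ℕ) % 2 ^ n, _⟩ = _
      rw [if_pos (Or.inr j.isLt)]
      rw [one_mul]
      congr 1
      exact Fin.ext (Nat.mod_eq_of_lt j.isLt)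
    have hhigh : ∀ j : Fin (2 ^ n),
        sylvester (n + 1) i (finCongr e2.symm (Fin.natAdd _ j)) =
          (if (i : ℕ) < 2 ^ n then 1 else -1) * sylvester n i' j := by
      intro j
      show (if (i : ℕ) < 2 ^ n ∨ (2 ^ n + (j : ℕ)) < 2 ^ n then 1 else -1) *
        sylvester n i' ⟨(2 ^ n + (j : ℕ)) % 2 ^ n, _⟩ = _
      have h1 : ¬ (2 ^ n + (j : ℕ)) < 2 ^ n := by omega
      have h2 : (⟨(2 ^ n + (j : ℕ)) % 2 ^ n, Nat.mod_lt _ (Nat.two_pow_pos n)⟩ : Fin (2 ^ n)) = j :=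
        Fin.ext (by simp [Nat.add_mod_left, Nat.mod_eq_of_lt j.isLt])
      rw [h2]
      congr 1
      simp [h1]
    rw [key, Finset.sum_congr rfl (fun j _ => hlow j), Finset.sum_congr rfl (fun j _ => hhigh j),
      ← Finset.mul_sum]
    by_cases hc : (i : ℕ) < 2 ^ n
    · have : (i' : ℕ) ≠ 0 := by simp [hi', Nat.mod_eq_of_lt hc, hi]
      rw [sylvester_row_sum n i' this]
      simp
    · rw [if_neg hc]
      ring

lemma sylvester_card_one (n : ℕ) (hn : 0 < n) (i : Fin (2 ^ n)) (hi : (i : ℕ) ≠ 0) :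
    (Finset.univ.filter fun j => sylvester n i j = 1).card = 2 ^ (n - 1) := by
  have h0 := sylvester_row_sum n i hi
  rw [← Finset.sum_filter_add_sum_filter_not Finset.univ (fun j => sylvester n i j = 1)] at h0
  have h1 : ∑ j ∈ Finset.univ.filter (fun j => sylvester n i j = 1), sylvester n i j =
      (Finset.univ.filter fun j => sylvester n i j = 1).card := by
    rw [Finset.sum_congr rfl (fun j hj => (Finset.mem_filter.mp hj).2)]
    simp
  have h2 : ∑ j ∈ Finset.univ.filter (fun j => ¬ sylvester n i j = 1), sylvester n i j =
      -(Finset.univ.filter fun j => ¬ sylvester n i j = 1).card := by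
    rw [Finset.sum_congr rfl (fun j hj =>
      ((sylvester_pm n i j).resolve_left (Finset.mem_filter.mp hj).2))]
    simp
  have h3 : (Finset.univ.filter fun j => sylvester n i j = 1).card +
      (Finset.univ.filter fun j => ¬ sylvester n i j = 1).card = 2 ^ n := by
    rw [Finset.card_filter_add_card_filter_not]
    simp
  have h4 : 2 ^ n = 2 * 2 ^ (n - 1) := by
    rw [← pow_succ']
    congr 1
    omega
  rw [h1, h2] at h0
  omega

/-- The high-low Hadamard-response channel: inputs `[k] = [s + t]` (the first
`s` inputs are sensitive), outputs `[S + t]` with `S = 2^{⌈log₂(s+1)⌉}`;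
sensitive input `x` is mapped into `[S]` according to row `x+1` of the
Hadamard matrix `H_S`, while non-sensitive `x` either lands uniformly in `[S]`
or reveals itself at output `x + S - s`. -/
noncomputable def hlChannel (s t : ℕ) (ε : ℝ)
    (x : Fin (s + t)) (y : Fin (2 ^ Nat.clog 2 (s + 1) + t)) : ℝ :=
  if hx : (x : ℕ) < s then
    if hy : (y : ℕ) < 2 ^ Nat.clog 2 (s + 1) then
      if sylvester (Nat.clog 2 (s + 1))
          ⟨(x : ℕ) + 1, by
            have := Nat.le_pow_clog (b := 2) (by norm_num) (s + 1); omega⟩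
          ⟨(y : ℕ), hy⟩ = 1 then
        2 * Real.exp ε / ((2 ^ Nat.clog 2 (s + 1) : ℝ) * (Real.exp ε + 1))
      else
        2 / ((2 ^ Nat.clog 2 (s + 1) : ℝ) * (Real.exp ε + 1))
    else 0
  else
    if (y : ℕ) < 2 ^ Nat.clog 2 (s + 1) then
      2 / ((2 ^ Nat.clog 2 (s + 1) : ℝ) * (Real.exp ε + 1))
    else if (y : ℕ) = (x : ℕ) + 2 ^ Nat.clog 2 (s + 1) - s then
      (Real.exp ε - 1) / (Real.exp ε + 1)
    else 0

/-- The high-low Hadamard-response channel is a valid channel (nonnegative,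
rows sum to one) and satisfies `(A, ε)`-high-low LDP: `Q(y|x) ≤ e^ε Q(y|x')`
for every sensitive `x`, every `x'`, and every output `y`. -/
theorem hlChannel_valid_and_private (s t : ℕ) (hs : 0 < s) (ht : 0 < t)
    (ε : ℝ) (hε : 0 < ε) :
    (∀ x y, 0 ≤ hlChannel s t ε x y) ∧
    (∀ x, ∑ y, hlChannel s t ε x y = 1) ∧
    (∀ (x x' : Fin (s + t)) (y : Fin (2 ^ Nat.clog 2 (s + 1) + t)),
      (x : ℕ) < s → hlChannel s t ε x y ≤ Real.exp ε * hlChannel s t ε x' y) := by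
  have he1 : 1 ≤ Real.exp ε := Real.one_le_exp hε.le
  have hepos : (0:ℝ) < Real.exp ε + 1 := by linarith
  have hSpos : (0:ℝ) < (2 ^ Nat.clog 2 (s + 1) : ℝ) := by positivity
  have nonneg : ∀ x y, 0 ≤ hlChannel s t ε x y := by
    intro x y
    unfold hlChannel
    split_ifs <;>
      first
        | positivity
        | exact div_nonneg (by linarith) hepos.le
        | exact le_refl 0
  refine ⟨nonneg, ?_, ?_⟩
  · -- row sums
    intro x
    rw [Fin.sum_univ_add]
    by_cases hx : (x : ℕ) < s
    · have hhigh : ∀ y : Fin t,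
          hlChannel s t ε x (Fin.natAdd (2 ^ Nat.clog 2 (s + 1)) y) = 0 := by
        intro y
        have : ¬ ((Fin.natAdd (2 ^ Nat.clog 2 (s + 1)) y : ℕ) < 2 ^ Nat.clog 2 (s + 1)) := by
          simp [Fin.natAdd]
        simp [hlChannel, hx, this]
      rw [Finset.sum_congr rfl (fun y _ => hhigh y), Finset.sum_const_zero, add_zero]
      have hxS : (x : ℕ) + 1 < 2 ^ Nat.clog 2 (s + 1) := by
        have := Nat.le_pow_clog (b := 2) (by norm_num) (s + 1); omega
      have hlow : ∀ y : Fin (2 ^ Nat.clog 2 (s + 1)),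
          hlChannel s t ε x (Fin.castAdd t y) =
            (if sylvester (Nat.clog 2 (s + 1)) ⟨(x : ℕ) + 1, hxS⟩ y = 1 then
              2 * Real.exp ε / ((2 ^ Nat.clog 2 (s + 1) : ℝ) * (Real.exp ε + 1))
            else 2 / ((2 ^ Nat.clog 2 (s + 1) : ℝ) * (Real.exp ε + 1))) := by
        intro y
        have hy : ((Fin.castAdd t y : ℕ)) < 2 ^ Nat.clog 2 (s + 1) := y.isLt
        rw [hlChannel, dif_pos hx, dif_pos hy]
        rfl
      rw [Finset.sum_congr rfl (fun y _ => hlow y), Finset.sum_ite, Finset.sum_const,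
        Finset.sum_const]
      have hn1 : 0 < Nat.clog 2 (s + 1) := Nat.clog_pos (by norm_num) (by omega)
      have hcard1 : (Finset.univ.filter fun y : Fin (2 ^ Nat.clog 2 (s + 1)) =>
          sylvester (Nat.clog 2 (s + 1)) ⟨(x : ℕ) + 1, hxS⟩ y = 1).card
            = 2 ^ (Nat.clog 2 (s + 1) - 1) :=
        sylvester_card_one _ hn1 _ (by simp)
      have hcard2 : (Finset.univ.filter fun y : Fin (2 ^ Nat.clog 2 (s + 1)) =>
          ¬ sylvester (Nat.clog 2 (s + 1)) ⟨(x : ℕ) + 1, hxS⟩ y = 1).card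
            = 2 ^ (Nat.clog 2 (s + 1) - 1) := by
        have := Finset.card_filter_add_card_filter_not
          (s := (Finset.univ : Finset (Fin (2 ^ Nat.clog 2 (s + 1)))))
          (p := fun y => sylvester (Nat.clog 2 (s + 1)) ⟨(x : ℕ) + 1, hxS⟩ y = 1)
        rw [hcard1, Finset.card_univ, Fintype.card_fin] at this
        have h4 : 2 ^ Nat.clog 2 (s + 1) = 2 * 2 ^ (Nat.clog 2 (s + 1) - 1) := by
          rw [← pow_succ']; congr 1; omega
        omega
      rw [hcard1, hcard2, nsmul_eq_mul, nsmul_eq_mul]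
      have h4 : (2 : ℝ) ^ Nat.clog 2 (s + 1) = 2 * 2 ^ (Nat.clog 2 (s + 1) - 1) := by
        rw [← pow_succ']; congr 1; omega
      have hSpos' : (0:ℝ) < (2 : ℝ) ^ (Nat.clog 2 (s + 1) - 1) := by positivity
      push_cast
      rw [h4]
      field_simp
    · -- non-sensitive
      have hlow : ∀ y : Fin (2 ^ Nat.clog 2 (s + 1)),
          hlChannel s t ε x (Fin.castAdd t y) =
            2 / ((2 ^ Nat.clog 2 (s + 1) : ℝ) * (Real.exp ε + 1)) := by
        intro y
        have hy : ((Fin.castAdd t y : ℕ)) < 2 ^ Nat.clog 2 (s + 1) := y.isLt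
        rw [hlChannel, dif_neg hx, if_pos hy]
      have hxt : (x : ℕ) - s < t := by have := x.isLt; omega
      have hhigh : ∀ y : Fin t,
          hlChannel s t ε x (Fin.natAdd (2 ^ Nat.clog 2 (s + 1)) y) =
            (if y = (⟨(x : ℕ) - s, hxt⟩ : Fin t) then
              (Real.exp ε - 1) / (Real.exp ε + 1) else 0) := by
        intro y
        have h1 : ¬ ((Fin.natAdd (2 ^ Nat.clog 2 (s + 1)) y : ℕ) <
            2 ^ Nat.clog 2 (s + 1)) := by simp [Fin.natAdd]
        rw [hlChannel, dif_neg hx, if_neg h1]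
        have hval : ((Fin.natAdd (2 ^ Nat.clog 2 (s + 1)) y : ℕ)) =
            2 ^ Nat.clog 2 (s + 1) + (y : ℕ) := rfl
        have hsx : s ≤ (x : ℕ) := not_lt.mp hx
        have h2 : ((Fin.natAdd (2 ^ Nat.clog 2 (s + 1)) y : ℕ) =
            (x : ℕ) + 2 ^ Nat.clog 2 (s + 1) - s) ↔ (y = ⟨(x : ℕ) - s, hxt⟩) := by
          rw [Fin.ext_iff, hval]
          simp only [Fin.val_mk]
          generalize 2 ^ Nat.clog 2 (s + 1) = m
          omega
        by_cases h3 : y = (⟨(x : ℕ) - s, hxt⟩ : Fin t)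
        · rw [if_pos (h2.mpr h3), if_pos h3]
        · rw [if_neg (fun h => h3 (h2.mp h)), if_neg h3]
      rw [Finset.sum_congr rfl (fun y _ => hlow y), Finset.sum_congr rfl (fun y _ => hhigh y),
        Finset.sum_const, Finset.sum_ite_eq' Finset.univ, if_pos (Finset.mem_univ _),
        Finset.card_univ, Fintype.card_fin, nsmul_eq_mul]
      push_cast
      field_simp
      ring
  · -- privacy
    intro x x' y hx
    by_cases hy : (y : ℕ) < 2 ^ Nat.clog 2 (s + 1)
    · have hub : hlChannel s t ε x y ≤
          2 * Real.exp ε / ((2 ^ Nat.clog 2 (s + 1) : ℝ) * (Real.exp ε + 1)) := by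
        rw [hlChannel, dif_pos hx, dif_pos hy]
        split_ifs
        · exact le_refl _
        · apply div_le_div_of_nonneg_right ?_ (by positivity)
          linarith
      have hlb : 2 / ((2 ^ Nat.clog 2 (s + 1) : ℝ) * (Real.exp ε + 1)) ≤
          hlChannel s t ε x' y := by
        rw [hlChannel]
        by_cases h1 : (x' : ℕ) < s
        · rw [dif_pos h1, dif_pos hy]
          split_ifs
          · apply div_le_div_of_nonneg_right ?_ (by positivity)
            linarith
          · exact le_refl _
        · rw [dif_neg h1, if_pos hy]
      calc hlChannel s t ε x y
          ≤ 2 * Real.exp ε / ((2 ^ Nat.clog 2 (s + 1) : ℝ) * (Real.exp ε + 1)) := hub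
        _ = Real.exp ε * (2 / ((2 ^ Nat.clog 2 (s + 1) : ℝ) * (Real.exp ε + 1))) := by ring
        _ ≤ Real.exp ε * hlChannel s t ε x' y := by
            exact mul_le_mul_of_nonneg_left hlb (Real.exp_pos ε).le
    · have h0 : hlChannel s t ε x y = 0 := by rw [hlChannel, dif_pos hx, dif_neg hy]
      rw [h0]
      exact mul_nonneg (Real.exp_pos ε).le (nonneg x' y)
end
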